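/- arXiv:0804.0526 — 2 statements merged into one kernel-verified Lean document; each statement's English description precedes it below -/
import Mathlib

section
/- The unilateral shift S on ℓ²(ℕ) is an isometry (S*S = 1), the operator S*S − SS* = 1 − SS* is the rank-one orthogonal projection onto the span of δ₀, and the C*-subalgebra of B(ℓ²(ℕ)) generated by S contains every compact operator on ℓ²(ℕ). -/
/-!
On the standard basis `S* δ₀ = 0` and `S* δₙ₊₁ = δₙ`, which gives `S*S = 1` and
`1 - SS* = |δ₀⟩⟨δ₀|`. The C*-algebra generated by `S` therefore contains the matrix units
`|δₘ⟩⟨δₖ| = Sᵐ (1 - SS*) S*ᵏ` and, by continuity and density, every `|δₘ⟩⟨v|`.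
A compact operator `K` is the norm limit of its truncations `Pₙ K = ∑_{m<n} |δₘ⟩⟨K* δₘ|`:
the partial-sum projections `Pₙ` are uniformly bounded and converge strongly to `1`, hence
uniformly on the compact closure of the image of the unit ball under `K`.
-/

noncomputable section

abbrev l2N : Type := lp (fun _ : ℕ => ℂ) 2

def δ (n : ℕ) : l2N := lp.single 2 n 1

open Filter Topology ContinuousLinearMap InnerProductSpace
open scoped InnerProductSpace

theorem EquicontinuousOn.tendstoUniformlyOn_of_tendsto {ι X α : Type*} [TopologicalSpace X]
    [UniformSpace α] {F : ι → X → α} {f : X → α} {p : Filter ι} {s : Set X}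
    (hs : IsCompact s) (hF : EquicontinuousOn F s)
    (h : ∀ x ∈ s, Tendsto (F · x) p (𝓝 (f x))) :
    TendstoUniformlyOn F f p s := by
  have hunif := (EquicontinuousOn.tendsto_uniformOnFun_iff_pi' (𝔖 := {s}) (by simpa using hs)
    (by simpa using hF) p f).mpr ?_
  · exact UniformOnFun.tendsto_iff_tendstoUniformlyOn.mp hunif s rfl
  · rw [tendsto_pi_nhds]
    rintro ⟨x, hx⟩
    exact h x (by simpa using hx)

section SchauderBasis

variable {𝕜 X Y : Type*} [NontriviallyNormedField 𝕜] [NormedAddCommGroup X] [NormedSpace 𝕜 X]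
  [CompleteSpace X] [NormedAddCommGroup Y] [NormedSpace 𝕜 Y]

theorem SchauderBasis.equicontinuous_proj (b : SchauderBasis 𝕜 X) :
    Equicontinuous fun n => ⇑(b.proj n) :=
  ((NormedSpace.equicontinuous_TFAE b.proj).out 5 1).mp b.exists_norm_proj_le

theorem SchauderBasis.tendsto_proj_comp_of_isCompactOperator (b : SchauderBasis 𝕜 X)
    {K : Y →L[𝕜] X} (hK : IsCompactOperator K) :
    Tendsto (fun n => b.proj n ∘L K) atTop (𝓝 K) := by
  refine (UniformConvergenceCLM.tendsto_iff_tendstoUniformlyOn _ _ _).mpr fun B hB => ?_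
  have hKB : IsCompact (closure (K '' B)) :=
    hK.isCompact_closure_image_of_isVonNBounded (f := (K : Y →ₗ[𝕜] X)) hB
  have hunif := (b.equicontinuous_proj.equicontinuousOn _).tendstoUniformlyOn_of_tendsto hKB
    fun x _ => b.tendsto_proj x
  exact (hunif.comp K).mono fun x hx => subset_closure ⟨x, hx, rfl⟩

end SchauderBasis

section Hilbert

variable {𝕜 E F : Type*} [RCLike 𝕜] [NormedAddCommGroup E] [InnerProductSpace 𝕜 E]
  [NormedAddCommGroup F] [InnerProductSpace 𝕜 F]

theorem HilbertBasis.rankOne_mem_of_forall_rankOne_mem {ι : Type*} (b : HilbertBasis ι 𝕜 E)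
    {A : Submodule 𝕜 (E →L[𝕜] F)} (hA : IsClosed (A : Set (E →L[𝕜] F))) {x : F}
    (h : ∀ i, rankOne 𝕜 x (b i) ∈ A) (y : E) : rankOne 𝕜 x y ∈ A := by
  let C : Submodule 𝕜 E := A.comap (rankOne 𝕜 (F := E) x).toLinearMap
  have hC : IsClosed (C : Set E) := hA.preimage (rankOne 𝕜 x).continuous
  have hspan : Submodule.span 𝕜 (Set.range b) ≤ C :=
    Submodule.span_le.mpr (Set.range_subset_iff.mpr h)
  have hC_top := Submodule.topologicalClosure_minimal _ hspan hC
  rw [b.dense_span] at hC_top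
  exact hC_top Submodule.mem_top

variable [CompleteSpace E] [CompleteSpace F]

theorem comp_rankOne_comp_adjoint (f g : E →L[𝕜] F) (x y : E) :
    f ∘L rankOne 𝕜 x y ∘L adjoint g = rankOne 𝕜 (f x) (g y) := by
  rw [rankOne_comp, comp_rankOne, adjoint_adjoint]

theorem HilbertBasis.tendsto_sum_rankOne_of_isCompactOperator (b : HilbertBasis ℕ 𝕜 E)
    {K : F →L[𝕜] E} (hK : IsCompactOperator K) :
    Tendsto (fun n => ∑ i ∈ Finset.range n, rankOne 𝕜 (b i) (adjoint K (b i))) atTop (𝓝 K) := by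
  convert b.toSchauderBasis.tendsto_proj_comp_of_isCompactOperator hK using 2 with n
  simp only [SchauderBasis.proj, GeneralSchauderBasis.proj, finsetSum_comp]
  refine Finset.sum_congr rfl fun i _ => ?_
  rw [← rankOne_comp]
  rfl

end Hilbert

def stdBasis : HilbertBasis ℕ ℂ l2N := default

theorem coe_stdBasis : ⇑stdBasis = δ := by
  ext1 n
  rw [← stdBasis.repr_symm_single]
  rfl

theorem inner_δ_δ (m n : ℕ) : ⟪δ m, δ n⟫_ℂ = if m = n then 1 else 0 := by
  rw [← coe_stdBasis]
  exact orthonormal_iff_ite.mp stdBasis.orthonormal m n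

theorem norm_δ (n : ℕ) : ‖δ n‖ = 1 := by
  rw [← coe_stdBasis]
  exact stdBasis.orthonormal.1 n

theorem ext_inner_δ {x y : l2N} (h : ∀ n, ⟪δ n, x⟫_ℂ = ⟪δ n, y⟫_ℂ) : x = y := by
  refine stdBasis.repr.injective (lp.ext (funext fun n => ?_))
  simpa only [stdBasis.repr_apply_apply, coe_stdBasis] using h n

theorem clm_ext_δ {f g : l2N →L[ℂ] l2N} (h : ∀ n, f (δ n) = g (δ n)) : f = g := by
  refine ContinuousLinearMap.ext_on ?_ (Set.forall_mem_range.mpr h)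
  rw [Submodule.dense_iff_topologicalClosure_eq_top, ← coe_stdBasis]
  exact stdBasis.dense_span

section Shift

variable {S : l2N →L[ℂ] l2N} (hS : ∀ n : ℕ, S (δ n) = δ (n + 1))
include hS

theorem adjoint_shift_δ (m : ℕ) : adjoint S (δ m) = if m = 0 then 0 else δ (m - 1) := by
  refine ext_inner_δ fun n => ?_
  rw [adjoint_inner_right, hS, inner_δ_δ]
  rcases m with _ | m
  · simp
  · simp [inner_δ_δ]

theorem adjoint_shift_mul_shift : adjoint S * S = 1 := by
  refine clm_ext_δ fun n => ?_
  simp [hS, adjoint_shift_δ hS]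

theorem one_sub_shift_mul_adjoint : 1 - S * adjoint S = rankOne ℂ (δ 0) (δ 0) := by
  refine clm_ext_δ fun n => ?_
  rcases n with _ | n
  · simp [adjoint_shift_δ hS, norm_δ]
  · simp [adjoint_shift_δ hS, inner_δ_δ, hS]

theorem shift_pow_δ_zero (m : ℕ) : (S ^ m) (δ 0) = δ m := by
  induction m with
  | zero => rfl
  | succ m ih => rw [pow_succ', mul_apply_eq_comp, ih, hS]

theorem rankOne_δ_mem_adjoin_shift (m k : ℕ) :
    rankOne ℂ (δ m) (δ k) ∈ StarAlgebra.adjoin ℂ {S} := by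
  have hS_mem : S ∈ StarAlgebra.adjoin ℂ {S} := StarAlgebra.self_mem_adjoin_singleton ℂ S
  have hadj_pow : adjoint (S ^ k) = adjoint S ^ k := by
    simp only [← star_eq_adjoint, star_pow]
  rw [← shift_pow_δ_zero hS m, ← shift_pow_δ_zero hS k, ← comp_rankOne_comp_adjoint,
    ← one_sub_shift_mul_adjoint hS, hadj_pow, ← star_eq_adjoint]
  exact mul_mem (pow_mem hS_mem m) <| mul_mem
    (sub_mem (one_mem _) (mul_mem hS_mem (star_mem hS_mem))) (pow_mem (star_mem hS_mem) k)

theorem rankOne_δ_mem_topologicalClosure_adjoin_shift (m : ℕ) (v : l2N) :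
    rankOne ℂ (δ m) v ∈ (StarAlgebra.adjoin ℂ {S}).topologicalClosure := by
  refine stdBasis.rankOne_mem_of_forall_rankOne_mem
    (A := (StarAlgebra.adjoin ℂ {S}).topologicalClosure.toSubalgebra.toSubmodule)
    (StarAlgebra.adjoin ℂ {S}).isClosed_topologicalClosure (fun k => ?_) v
  rw [coe_stdBasis]
  exact StarSubalgebra.le_topologicalClosure _ (rankOne_δ_mem_adjoin_shift hS m k)

end Shift

open ContinuousLinearMap in
/-- The unilateral shift `S` on `ℓ²(ℕ)` (the bounded operator determined by
`S δₙ = δ_{n+1}`) is an isometry (`S*S = 1`), the operator `S*S − SS* = 1 − SS*`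
is the rank-one orthogonal projection onto the span of `δ₀`, and the
C*-subalgebra of `B(ℓ²(ℕ))` generated by `S` contains every compact operator. -/
theorem stmt0 (S : l2N →L[ℂ] l2N) (hS : ∀ n : ℕ, S (δ n) = δ (n + 1)) :
    adjoint S * S = 1 ∧
    adjoint S * S - S * adjoint S = (innerSL ℂ (δ 0)).smulRight (δ 0) ∧
    1 - S * adjoint S = (innerSL ℂ (δ 0)).smulRight (δ 0) ∧
    ∀ K : l2N →L[ℂ] l2N, IsCompactOperator K →
      K ∈ (StarAlgebra.adjoin ℂ {S}).topologicalClosure := by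
  have hisom := adjoint_shift_mul_shift hS
  have hproj := one_sub_shift_mul_adjoint hS
  refine ⟨hisom, by rw [hisom, hproj, rankOne_def], by rw [hproj, rankOne_def], fun K hK => ?_⟩
  refine (StarSubalgebra.isClosed_topologicalClosure _).mem_of_tendsto
    (stdBasis.tendsto_sum_rankOne_of_isCompactOperator hK)
    (Eventually.of_forall fun n => sum_mem fun i _ => ?_)
  rw [coe_stdBasis]
  exact rankOne_δ_mem_topologicalClosure_adjoin_shift hS i _
end
end

section
/- For any subset X ⊆ ℤ and any n ∈ ℤ, the partial translation operator tₙ on ℓ²(X) is a compact operator if and only if the set {x ∈ X : x + n ∈ X} is finite. -/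
/-!
If `tₙ` is compact, it maps the unit vectors `δₓ` with `x, x + n ∈ X` to the unit vectors
`δ_{x+n}`, which are pairwise at distance at least `1`; such a family lies in the relatively
compact image of the unit ball only if it is finite. Conversely, the expansion `f = ∑ f x • δₓ`
shows that `tₙ` takes values in the span of the finitely many nonzero vectors `tₙ δₓ`, and a
bounded operator of finite rank is compact.
-/

open Metric

theorem TotallyBounded.finite_of_pairwise_le_dist {α ι : Type*} [PseudoMetricSpace α]
    {s : Set α} (hs : TotallyBounded s) {v : ι → α} (hv : ∀ i, v i ∈ s) {δ : ℝ} (hδ : 0 < δ)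
    (hsep : Pairwise fun i j => δ ≤ dist (v i) (v j)) : Finite ι := by
  obtain ⟨t, ht, hcover⟩ := totallyBounded_iff.mp hs (δ / 2) (half_pos hδ)
  have hnear : ∀ i, ∃ y ∈ t, v i ∈ ball y (δ / 2) := fun i => by
    simpa using hcover (hv i)
  choose c hct hc using hnear
  have : Finite t := ht
  refine Finite.of_injective (fun i => (⟨c i, hct i⟩ : t)) fun i j hij => ?_
  by_contra hne
  have hcij : c i = c j := congrArg Subtype.val hij
  have hclose : dist (v i) (v j) < δ := calc
    dist (v i) (v j) ≤ dist (v i) (c j) + dist (v j) (c j) := dist_triangle_right ..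
    _ < δ / 2 + δ / 2 := add_lt_add (hcij ▸ hc i) (hc j)
    _ = δ := add_halves δ
  exact (hsep hne).not_gt hclose

theorem IsCompactOperator.finite_of_pairwise_le_dist {𝕜 E F ι : Type*}
    [NontriviallyNormedField 𝕜] [NormedAddCommGroup E] [NormedSpace 𝕜 E]
    [NormedAddCommGroup F] [NormedSpace 𝕜 F] {T : E →L[𝕜] F} (hT : IsCompactOperator T)
    {v : ι → E} (hv : ∀ i, ‖v i‖ ≤ 1) {δ : ℝ} (hδ : 0 < δ)
    (hsep : Pairwise fun i j => δ ≤ dist (T (v i)) (T (v j))) : Finite ι :=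
  (hT.isCompact_closure_image_closedBall 1).totallyBounded.finite_of_pairwise_le_dist
    (fun i => subset_closure ⟨v i, mem_closedBall_zero_iff.mpr (hv i), rfl⟩) hδ hsep

theorem ContinuousLinearMap.isCompactOperator_of_range_le {𝕜 E F : Type*}
    [NontriviallyNormedField 𝕜] [LocallyCompactSpace 𝕜] [NormedAddCommGroup E]
    [NormedSpace 𝕜 E] [NormedAddCommGroup F] [NormedSpace 𝕜 F] (T : E →L[𝕜] F)
    (V : Submodule 𝕜 F) [FiniteDimensional 𝕜 V] (hT : ∀ x, T x ∈ V) : IsCompactOperator T :=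
  have : ProperSpace V := FiniteDimensional.proper 𝕜 V
  (isCompactOperator_of_locallyCompactSpace_dom (T.codRestrict V hT)).clm_comp V.subtypeL

namespace lp

variable {ι : Type*} [DecidableEq ι]

theorem norm_le_dist_single {E : ι → Type*} [∀ i, NormedAddCommGroup (E i)] {p : ENNReal}
    [Fact (1 ≤ p)] {i j : ι} (hij : i ≠ j) (a : E i) (b : E j) :
    ‖a‖ ≤ dist (lp.single p i a) (lp.single p j b) := by
  rw [dist_eq_norm]
  calc ‖a‖ = ‖(lp.single p i a - lp.single p j b) i‖ := by simp [Pi.single_eq_of_ne hij]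
    _ ≤ _ := norm_apply_le_norm (zero_lt_one.trans_le Fact.out).ne' _ i

theorem mem_topologicalClosure_span_single {𝕜 F : Type*} [NormedField 𝕜]
    [NormedAddCommGroup F] [NormedSpace 𝕜 F] {p : ENNReal} [Fact (1 ≤ p)] (hp : p ≠ ⊤)
    (T : lp (fun _ : ι => 𝕜) p →L[𝕜] F) (f : lp (fun _ : ι => 𝕜) p) :
    T f ∈ (Submodule.span 𝕜 (Set.range fun i => T (lp.single p i 1))).topologicalClosure := by
  have hterm : ∀ i, T (lp.single p i (f i)) = f i • T (lp.single p i 1) := fun i => by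
    rw [← map_smul, ← lp.single_smul, smul_eq_mul, mul_one]
  have hsum : HasSum (fun i => f i • T (lp.single p i 1)) (T f) := by
    simpa only [hterm] using (lp.hasSum_single hp f).mapL T
  exact (Submodule.isClosed_topologicalClosure _).mem_of_tendsto hsum
    (.of_forall fun s => Submodule.sum_mem _ fun i _ =>
      Submodule.le_topologicalClosure _ (Submodule.smul_mem _ _ (Submodule.subset_span ⟨i, rfl⟩)))

end lp

/-- For any `X ⊆ ℤ` and `n ∈ ℤ`, the partial translation operator `tₙ` on `ℓ²(X)`
(determined by `tₙ δₓ = δ_{x+n}` if `x + n ∈ X` and `tₙ δₓ = 0` otherwise) is compact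
if and only if the set `{x ∈ X : x + n ∈ X}` is finite. -/
theorem stmt8 (X : Set ℤ) (n : ℤ)
    (T : lp (fun _ : X => ℂ) 2 →L[ℂ] lp (fun _ : X => ℂ) 2)
    (hT : ∀ x : X,
      (∀ h : (x : ℤ) + n ∈ X,
        T (lp.single 2 x 1) = lp.single 2 (⟨(x : ℤ) + n, h⟩ : X) 1) ∧
      ((x : ℤ) + n ∉ X → T (lp.single 2 x 1) = 0)) :
    IsCompactOperator T ↔ {x : ℤ | x ∈ X ∧ x + n ∈ X}.Finite := by
  set I : Set X := {x | (x : ℤ) + n ∈ X}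
  have hS : {x : ℤ | x ∈ X ∧ x + n ∈ X} = Subtype.val '' I := by
    ext x
    simp [I, and_comm]
  rw [hS, Set.finite_image_iff Subtype.val_injective.injOn, ← Set.finite_coe_iff]
  constructor
  · intro hcompact
    refine hcompact.finite_of_pairwise_le_dist (v := fun x : I => lp.single 2 (x : X) 1)
      (fun _ => ((lp.norm_single (p := 2) (by norm_num) _ _).trans norm_one).le) one_pos ?_
    intro x y hxy
    have hshift : (⟨(x : ℤ) + n, x.2⟩ : X) ≠ ⟨(y : ℤ) + n, y.2⟩ := fun h =>
      hxy (Subtype.ext (Subtype.ext (add_right_cancel (congrArg Subtype.val h))))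
    simpa only [(hT x).1 x.2, (hT y).1 y.2, norm_one] using
      lp.norm_le_dist_single (E := fun _ : X => ℂ) (p := 2) hshift 1 1
  · intro hI
    set V := Submodule.span ℂ ((fun x : X => T (lp.single 2 x 1)) '' I)
    have : FiniteDimensional ℂ V :=
      FiniteDimensional.span_of_finite ℂ ((Set.finite_coe_iff.mp hI).image _)
    have hV : (Submodule.span ℂ (Set.range fun x : X => T (lp.single 2 x 1))).topologicalClosure
        ≤ V := by
      refine Submodule.topologicalClosure_minimal _ (Submodule.span_le.mpr ?_)
        V.closed_of_finiteDimensional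
      rintro _ ⟨x, rfl⟩
      by_cases hx : x ∈ I
      · exact Submodule.subset_span ⟨x, hx, rfl⟩
      · simp [(hT x).2 hx]
    exact T.isCompactOperator_of_range_le V fun f =>
      hV (lp.mem_topologicalClosure_span_single (by simp) T f)
end
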